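/- For a directed line graph on N nodes with all edge weights 1 and a self-loop of weight 1 added at the first (source) node, the symmetrized directed graph Laplacian (L_r^d)^T L_r^d, where L_r^d = I - D^{-1}W is the random-walk Laplacian, equals the combinatorial graph Laplacian of the undirected path graph on N nodes with all edge weights 1. -/
import Mathlib


open Matrix

lemma ind_sum (N m : ℕ) (c : ℝ) :
    (∑ k : Fin N, if (k : ℕ) = m then c else 0) = if m < N then c else 0 := by
  by_cases h : m < N
  · rw [if_pos h, Finset.sum_eq_single (⟨m, h⟩ : Fin N)]
    · simp
    · intro b _ hb
      rw [if_neg]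
      simpa [Fin.ext_iff] using hb
    · simp
  · rw [if_neg h]
    apply Finset.sum_eq_zero
    intro k _
    rw [if_neg]
    exact fun hk => h (hk ▸ k.isLt)

/-- For a directed line graph on `N` nodes (edges `i → i+1` with weight 1, plus a
self-loop of weight 1 at the first node), the symmetrized random-walk Laplacian
`(L_r^d)ᵀ * L_r^d` with `L_r^d = I - D⁻¹ W` equals the combinatorial Laplacian of
the undirected path graph on `N` nodes with all edge weights 1. -/
theorem stmt_0 (N : ℕ) (hN : 2 ≤ N)
    (W D Lr Lu : Matrix (Fin N) (Fin N) ℝ)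
    (hW : ∀ i j : Fin N, W i j =
      (if i = j ∧ (i : ℕ) = 0 then (1 : ℝ) else 0) +
      (if (i : ℕ) = (j : ℕ) + 1 then (1 : ℝ) else 0))
    (hD : ∀ i j : Fin N, D i j = if i = j then ∑ k, W i k else 0)
    (hLr : Lr = 1 - D⁻¹ * W)
    (hLu : ∀ i j : Fin N, Lu i j =
      if i = j then (if (i : ℕ) = 0 ∨ (i : ℕ) = N - 1 then (1 : ℝ) else 2)
      else if (i : ℕ) = (j : ℕ) + 1 ∨ (j : ℕ) = (i : ℕ) + 1 then (-1 : ℝ) else 0) :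
    Lrᵀ * Lr = Lu := by
  -- Step 1: D = 1
  have hD1 : D = 1 := by
    ext i j
    rw [hD, one_apply]
    by_cases hij : i = j
    · rw [if_pos hij, if_pos hij]
      have hiN := i.isLt
      by_cases hi0 : (i : ℕ) = 0
      · have key : ∀ k ∈ Finset.univ, W i k = if (k : ℕ) = 0 then (1 : ℝ) else 0 := by
          intro k _
          have hkN := k.isLt
          rw [hW]
          simp only [Fin.ext_iff]
          split_ifs <;> first | (exfalso; omega) | norm_num
        rw [Finset.sum_congr rfl key, ind_sum, if_pos (by omega)]
      · have key : ∀ k ∈ Finset.univ, W i k = if (k : ℕ) = (i : ℕ) - 1 then (1 : ℝ) else 0 := by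
          intro k _
          have hkN := k.isLt
          rw [hW]
          simp only [Fin.ext_iff]
          split_ifs <;> first | (exfalso; omega) | norm_num
        rw [Finset.sum_congr rfl key, ind_sum, if_pos (by omega)]
    · rw [if_neg hij, if_neg hij]
  -- Step 2: entries of Lr
  have hLr' : ∀ k l : Fin N, Lr k l =
      (if k = l ∧ (l : ℕ) ≠ 0 then (1 : ℝ) else 0) -
      (if (k : ℕ) = (l : ℕ) + 1 then (1 : ℝ) else 0) := by
    intro k l
    rw [hLr, hD1, inv_one, one_mul, Matrix.sub_apply, one_apply, hW]
    simp only [Fin.ext_iff]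
    split_ifs <;> first | (exfalso; omega) | norm_num
  -- Step 3: entrywise computation
  ext i j
  rw [Matrix.mul_apply, hLu]
  simp only [transpose_apply]
  rw [Finset.sum_congr rfl (fun k _ => by rw [hLr' k i, hLr' k j])]
  have hiN := i.isLt
  have hjN := j.isLt
  by_cases hij : i = j
  · subst hij
    rw [if_pos rfl]
    by_cases hi0 : (i : ℕ) = 0
    · rw [if_pos (Or.inl hi0)]
      have key : ∀ k ∈ Finset.univ,
          ((if k = i ∧ (i : ℕ) ≠ 0 then (1:ℝ) else 0) - (if (k:ℕ) = (i:ℕ)+1 then 1 else 0)) *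
          ((if k = i ∧ (i : ℕ) ≠ 0 then (1:ℝ) else 0) - (if (k:ℕ) = (i:ℕ)+1 then 1 else 0)) =
          if (k : ℕ) = (i : ℕ) + 1 then (1:ℝ) else 0 := by
        intro k _
        have hkN := k.isLt
        simp only [Fin.ext_iff]
        split_ifs <;> first | (exfalso; omega) | norm_num
      rw [Finset.sum_congr rfl key, ind_sum, if_pos (by omega)]
    · by_cases hiL : (i : ℕ) = N - 1
      · rw [if_pos (Or.inr hiL)]
        have key : ∀ k ∈ Finset.univ,
            ((if k = i ∧ (i : ℕ) ≠ 0 then (1:ℝ) else 0) - (if (k:ℕ) = (i:ℕ)+1 then 1 else 0)) *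
            ((if k = i ∧ (i : ℕ) ≠ 0 then (1:ℝ) else 0) - (if (k:ℕ) = (i:ℕ)+1 then 1 else 0)) =
            if (k : ℕ) = (i : ℕ) then (1:ℝ) else 0 := by
          intro k _
          have hkN := k.isLt
          simp only [Fin.ext_iff]
          split_ifs <;> first | (exfalso; omega) | norm_num
        rw [Finset.sum_congr rfl key, ind_sum, if_pos (by omega)]
      · rw [if_neg (by push_neg; exact ⟨hi0, hiL⟩)]
        have key : ∀ k ∈ Finset.univ,
            ((if k = i ∧ (i : ℕ) ≠ 0 then (1:ℝ) else 0) - (if (k:ℕ) = (i:ℕ)+1 then 1 else 0)) *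
            ((if k = i ∧ (i : ℕ) ≠ 0 then (1:ℝ) else 0) - (if (k:ℕ) = (i:ℕ)+1 then 1 else 0)) =
            (if (k : ℕ) = (i : ℕ) then (1:ℝ) else 0) +
            (if (k : ℕ) = (i : ℕ) + 1 then (1:ℝ) else 0) := by
          intro k _
          have hkN := k.isLt
          simp only [Fin.ext_iff]
          split_ifs <;> first | (exfalso; omega) | norm_num
        rw [Finset.sum_congr rfl key, Finset.sum_add_distrib, ind_sum, ind_sum,
          if_pos (by omega), if_pos (by omega)]
        norm_num
  · rw [if_neg hij]
    have hijn : (i : ℕ) ≠ (j : ℕ) := fun h => hij (Fin.ext h)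
    by_cases h1 : (i : ℕ) = (j : ℕ) + 1
    · rw [if_pos (Or.inl h1)]
      have key : ∀ k ∈ Finset.univ,
          ((if k = i ∧ (i : ℕ) ≠ 0 then (1:ℝ) else 0) - (if (k:ℕ) = (i:ℕ)+1 then 1 else 0)) *
          ((if k = j ∧ (j : ℕ) ≠ 0 then (1:ℝ) else 0) - (if (k:ℕ) = (j:ℕ)+1 then 1 else 0)) =
          if (k : ℕ) = (i : ℕ) then (-1:ℝ) else 0 := by
        intro k _
        have hkN := k.isLt
        simp only [Fin.ext_iff]
        split_ifs <;> first | (exfalso; omega) | norm_num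
      rw [Finset.sum_congr rfl key, ind_sum, if_pos (by omega)]
    · by_cases h2 : (j : ℕ) = (i : ℕ) + 1
      · rw [if_pos (Or.inr h2)]
        have key : ∀ k ∈ Finset.univ,
            ((if k = i ∧ (i : ℕ) ≠ 0 then (1:ℝ) else 0) - (if (k:ℕ) = (i:ℕ)+1 then 1 else 0)) *
            ((if k = j ∧ (j : ℕ) ≠ 0 then (1:ℝ) else 0) - (if (k:ℕ) = (j:ℕ)+1 then 1 else 0)) =
            if (k : ℕ) = (j : ℕ) then (-1:ℝ) else 0 := by
          intro k _
          have hkN := k.isLt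
          simp only [Fin.ext_iff]
          split_ifs <;> first | (exfalso; omega) | norm_num
        rw [Finset.sum_congr rfl key, ind_sum, if_pos (by omega)]
      · rw [if_neg (by push_neg; exact ⟨h1, h2⟩)]
        apply Finset.sum_eq_zero
        intro k _
        have hkN := k.isLt
        simp only [Fin.ext_iff]
        split_ifs <;> first | (exfalso; omega) | norm_num
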